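/- There exist C > 0 and ε₀ > 0 such that for all ε ∈ (0, ε₀), all ξ ∈ [−ξ₁, ξ₂], and all θ ∈ [0,π]: |(sin θ · w_θ(ξ)/(4 a_ε s₀))·∫_{2ξ₁+ξ}^{2(ξ₁+ξ₂)−ξ} (w_θ(t)² − w_θ(ξ)²)/w_θ(t)³ dt| ≤ C and |(sin θ · w_θ(ξ)/(4 a_ε s₀))·∫_{2ξ₂−ξ}^{2(ξ₁+ξ₂)+ξ} (w_θ(t)² − w_θ(ξ)²)/w_θ(t)³ dt| ≤ C. -/
import Mathlib


open Real MeasureTheory intervalIntegral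

set_option maxHeartbeats 1000000

noncomputable section

/-- The distance parameter `a_ε`. -/
def aEps (r₁ r₂ ε : ℝ) : ℝ :=
  Real.sqrt ε * Real.sqrt ((2*r₁+ε)*(2*r₂+ε)*(2*r₁+2*r₂+ε)) / (2*(r₁+r₂+ε))

def xi (r : ℝ) (r₁ r₂ ε : ℝ) : ℝ := Real.arsinh (aEps r₁ r₂ ε / r)

/-- `w θ ξ = √(cosh ξ − cos θ)`. -/
def w (θ ξ : ℝ) : ℝ := Real.sqrt (Real.cosh ξ - Real.cos θ)

lemma w_nonneg (θ ξ : ℝ) : 0 ≤ w θ ξ := Real.sqrt_nonneg _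

lemma w_sq (θ ξ : ℝ) : w θ ξ ^ 2 = Real.cosh ξ - Real.cos θ :=
  Real.sq_sqrt (by nlinarith [Real.one_le_cosh ξ, Real.cos_le_one θ])

/-- `sinh x ≤ x * cosh x` for `0 ≤ x`. -/
lemma sinh_le_mul_cosh {x : ℝ} (hx : 0 ≤ x) : Real.sinh x ≤ x * Real.cosh x := by
  have hmono : Monotone (fun y : ℝ => y * Real.cosh y - Real.sinh y) := by
    apply monotone_of_deriv_nonneg
    · exact (differentiable_id.mul Real.differentiable_cosh).sub Real.differentiable_sinh
    · intro y
      have h : HasDerivAt (fun y : ℝ => y * Real.cosh y - Real.sinh y)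
          (1 * Real.cosh y + y * Real.sinh y - Real.cosh y) y :=
        ((hasDerivAt_id y).mul (Real.hasDerivAt_cosh y)).sub (Real.hasDerivAt_sinh y)
      rw [h.deriv]
      rcases le_or_gt 0 y with hy | hy
      · have : (0:ℝ) ≤ Real.sinh y := by
          rw [← Real.sinh_zero]; exact Real.sinh_le_sinh.2 hy
        nlinarith
      · have : Real.sinh y ≤ 0 := by
          rw [← Real.sinh_zero]; exact Real.sinh_le_sinh.2 (le_of_lt hy)
        nlinarith
  have h0 := hmono hx
  simp only [Real.sinh_zero, Real.cosh_zero] at h0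
  nlinarith [h0]

/-- `x^2 ≤ 2 * (cosh x - 1)` for all `x`. -/
lemma sq_le_two_mul_cosh_sub_one (x : ℝ) : x ^ 2 ≤ 2 * (Real.cosh x - 1) := by
  have h1 : |x| / 2 ≤ Real.sinh (|x| / 2) := by
    rcases eq_or_lt_of_le (abs_nonneg x) with h | h
    · simp [← h]
    · exact le_of_lt (Real.self_lt_sinh_iff.2 (by positivity))
  have h2 : Real.cosh x = 2 * Real.sinh (|x| / 2) ^ 2 + 1 := by
    have hcs := Real.cosh_sq (|x| / 2)
    have h3 : Real.cosh (2 * (|x| / 2)) =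
        Real.cosh (|x| / 2) ^ 2 + Real.sinh (|x| / 2) ^ 2 :=
      Real.cosh_two_mul _
    have h4 : (2 : ℝ) * (|x| / 2) = |x| := by ring
    rw [h4] at h3
    rw [← Real.cosh_abs x]
    nlinarith
  have h5 : 0 ≤ |x| / 2 := by positivity
  nlinarith [sq_abs x]

/-- Pointwise bound on the integrand. -/
lemma pointwise_bound (θ ξ t L T : ℝ) (hs : 0 ≤ Real.sin θ) (hL : 0 < L)
    (hLt : L ≤ t) (htT : t ≤ T) (hξ : |ξ| ≤ t) :
    |Real.sin θ * w θ ξ * ((w θ t ^ 2 - w θ ξ ^ 2) / w θ t ^ 3)| ≤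
      2 * Real.sinh T ^ 2 / L := by
  have ht0 : 0 < t := lt_of_lt_of_le hL hLt
  set u := w θ t with hu
  set v := w θ ξ with hv
  have hu0 : 0 ≤ u := w_nonneg θ t
  have hv0 : 0 ≤ v := w_nonneg θ ξ
  have hu2 : u ^ 2 = Real.cosh t - Real.cos θ := w_sq θ t
  have hv2 : v ^ 2 = Real.cosh ξ - Real.cos θ := w_sq θ ξ
  have hch : Real.cosh ξ ≤ Real.cosh t := by
    rw [← Real.cosh_abs ξ, ← Real.cosh_abs t]
    exact Real.cosh_le_cosh.2 (by rw [abs_abs, abs_abs, abs_of_pos ht0]; exact hξ)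
  have hupos : 0 < u := by
    rw [hu, w]
    apply Real.sqrt_pos.2
    have := Real.one_lt_cosh.2 (ne_of_gt ht0)
    nlinarith [Real.cos_le_one θ]
  have hvu : v ≤ u := by
    rw [hu, hv, w, w]
    exact Real.sqrt_le_sqrt (by linarith)
  have hsin2 : Real.sin θ ^ 2 ≤ 2 * u ^ 2 := by
    nlinarith [Real.sin_sq_add_cos_sq θ, Real.cos_le_one θ, Real.neg_one_le_cos θ,
      Real.one_le_cosh t]
  have hL2 : L ^ 2 ≤ 2 * u ^ 2 := by
    nlinarith [sq_le_two_mul_cosh_sub_one t, Real.cos_le_one θ]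
  have hS : u ^ 2 - v ^ 2 ≤ Real.sinh T ^ 2 := by
    have hst : Real.sinh t ≤ Real.sinh T := Real.sinh_le_sinh.2 htT
    have hst0 : 0 ≤ Real.sinh t := by
      rw [← Real.sinh_zero]; exact Real.sinh_le_sinh.2 (le_of_lt ht0)
    have := Real.cosh_sq t
    nlinarith [Real.one_le_cosh ξ, Real.one_le_cosh t]
  have hSnn : (0 : ℝ) ≤ Real.sinh T ^ 2 := sq_nonneg _
  have hnum_nn : 0 ≤ u ^ 2 - v ^ 2 := by nlinarith
  have hvu2 : v ^ 2 ≤ u ^ 2 := by nlinarith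
  have hexpr_nn : 0 ≤ Real.sin θ * v * ((u ^ 2 - v ^ 2) / u ^ 3) := by
    apply mul_nonneg (mul_nonneg hs hv0)
    exact div_nonneg hnum_nn (by positivity)
  rw [abs_of_nonneg hexpr_nn]
  have he : Real.sin θ * v * ((u ^ 2 - v ^ 2) / u ^ 3) =
      Real.sin θ * v * (u ^ 2 - v ^ 2) / u ^ 3 := by ring
  rw [he, div_le_div_iff₀ (by positivity) hL]
  -- goal : sin θ * v * (u^2 - v^2) * L ≤ 2 * sinh T ^ 2 * u ^ 3
  have hlhs_nn : 0 ≤ Real.sin θ * v * (u ^ 2 - v ^ 2) * L :=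
    mul_nonneg (mul_nonneg (mul_nonneg hs hv0) hnum_nn) (le_of_lt hL)
  have hrhs_nn : 0 ≤ 2 * Real.sinh T ^ 2 * u ^ 3 := by positivity
  have hsq : (Real.sin θ * v * (u ^ 2 - v ^ 2) * L) ^ 2 ≤
      (2 * Real.sinh T ^ 2 * u ^ 3) ^ 2 := by
    have e1 : (Real.sin θ * v * (u ^ 2 - v ^ 2) * L) ^ 2 =
        Real.sin θ ^ 2 * v ^ 2 * (u ^ 2 - v ^ 2) ^ 2 * L ^ 2 := by ring
    rw [e1]
    have h2 : (u ^ 2 - v ^ 2) ^ 2 ≤ (Real.sinh T ^ 2) ^ 2 :=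
      pow_le_pow_left₀ hnum_nn hS 2
    have hA : Real.sin θ ^ 2 * v ^ 2 ≤ 2 * u ^ 2 * u ^ 2 :=
      mul_le_mul hsin2 hvu2 (sq_nonneg _) (by positivity)
    have hB : Real.sin θ ^ 2 * v ^ 2 * (u ^ 2 - v ^ 2) ^ 2 ≤
        2 * u ^ 2 * u ^ 2 * (Real.sinh T ^ 2) ^ 2 :=
      mul_le_mul hA h2 (sq_nonneg _) (by positivity)
    have hCc : Real.sin θ ^ 2 * v ^ 2 * (u ^ 2 - v ^ 2) ^ 2 * L ^ 2 ≤
        2 * u ^ 2 * u ^ 2 * (Real.sinh T ^ 2) ^ 2 * (2 * u ^ 2) :=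
      mul_le_mul hB hL2 (sq_nonneg _) (by positivity)
    calc Real.sin θ ^ 2 * v ^ 2 * (u ^ 2 - v ^ 2) ^ 2 * L ^ 2
        ≤ 2 * u ^ 2 * u ^ 2 * (Real.sinh T ^ 2) ^ 2 * (2 * u ^ 2) := hCc
      _ = (2 * Real.sinh T ^ 2 * u ^ 3) ^ 2 := by ring
  calc Real.sin θ * v * (u ^ 2 - v ^ 2) * L
      = Real.sqrt ((Real.sin θ * v * (u ^ 2 - v ^ 2) * L) ^ 2) :=
        (Real.sqrt_sq hlhs_nn).symm
    _ ≤ Real.sqrt ((2 * Real.sinh T ^ 2 * u ^ 3) ^ 2) := Real.sqrt_le_sqrt hsq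
    _ = 2 * Real.sinh T ^ 2 * u ^ 3 := Real.sqrt_sq hrhs_nn

/-- Bound on the integral. -/
lemma int_bound (θ ξ p q L T : ℝ) (hs : 0 ≤ Real.sin θ) (hL : 0 < L) (hLp : L ≤ p)
    (hpq : p ≤ q) (hqT : q ≤ T) (hξ : |ξ| ≤ p) :
    |∫ t in p..q, Real.sin θ * w θ ξ * ((w θ t ^ 2 - w θ ξ ^ 2) / w θ t ^ 3)| ≤
      2 * Real.sinh T ^ 2 / L * (q - p) := by
  have h := intervalIntegral.norm_integral_le_of_norm_le_const
    (C := 2 * Real.sinh T ^ 2 / L)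
    (f := fun t => Real.sin θ * w θ ξ * ((w θ t ^ 2 - w θ ξ ^ 2) / w θ t ^ 3))
    (a := p) (b := q) ?_
  · rw [Real.norm_eq_abs, abs_of_nonneg (sub_nonneg.2 hpq)] at h
    exact h
  · intro x hx
    rw [Set.uIoc_of_le hpq] at hx
    rw [Real.norm_eq_abs]
    exact pointwise_bound θ ξ x L T hs hL (le_of_lt (lt_of_le_of_lt hLp hx.1))
      (le_trans hx.2 hqT) (le_trans hξ (le_of_lt hx.1))

theorem stmt12 (r₁ r₂ : ℝ) (hr₁ : 0 < r₁) (hr₂ : 0 < r₂) :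
    ∃ C > 0, ∃ ε₀ > 0, ∀ ε ∈ Set.Ioo 0 ε₀,
      ∀ ξ ∈ Set.Icc (-(xi r₁ r₁ r₂ ε)) (xi r₂ r₁ r₂ ε), ∀ θ ∈ Set.Icc 0 Real.pi,
        (|Real.sin θ * w θ ξ /
            (4 * aEps r₁ r₂ ε * (xi r₁ r₁ r₂ ε + xi r₂ r₁ r₂ ε)) *
            ∫ t in (2 * xi r₁ r₁ r₂ ε + ξ)..(2 * (xi r₁ r₁ r₂ ε + xi r₂ r₁ r₂ ε) - ξ),
              (w θ t ^ 2 - w θ ξ ^ 2) / w θ t ^ 3| ≤ C) ∧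
        (|Real.sin θ * w θ ξ /
            (4 * aEps r₁ r₂ ε * (xi r₁ r₁ r₂ ε + xi r₂ r₁ r₂ ε)) *
            ∫ t in (2 * xi r₂ r₁ r₂ ε - ξ)..(2 * (xi r₁ r₁ r₂ ε + xi r₂ r₁ r₂ ε) + ξ),
              (w θ t ^ 2 - w θ ξ ^ 2) / w θ t ^ 3| ≤ C) := by
  set M : ℝ := 1 / r₁ + 1 / r₂ with hM
  have hM0 : 0 < M := by positivity
  set R : ℝ := max r₁ r₂ with hR
  have hR0 : 0 < R := lt_of_lt_of_le hr₁ (le_max_left _ _)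
  have hcoshM : 0 < Real.cosh M := Real.cosh_pos M
  have hcosh3M : 0 < Real.cosh (3 * M) := Real.cosh_pos (3 * M)
  refine ⟨9 * M ^ 2 * R * Real.cosh M * Real.cosh (3 * M) ^ 2, by positivity, ?_⟩
  set C : ℝ := 9 * M ^ 2 * R * Real.cosh M * Real.cosh (3 * M) ^ 2 with hC
  have hC0 : 0 < C := by positivity
  set P1 : ℝ := (2 * r₁ + 1) * (2 * r₂ + 1) * (2 * r₁ + 2 * r₂ + 1) with hP1
  have hP10 : 0 < P1 := by positivity
  refine ⟨min 1 ((2 * (r₁ + r₂)) ^ 2 / P1), by positivity, ?_⟩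
  rintro ε ⟨hε0, hε1⟩
  have hε_le_one : ε < 1 := lt_of_lt_of_le hε1 (min_le_left _ _)
  have hε_le_P : ε < (2 * (r₁ + r₂)) ^ 2 / P1 := lt_of_lt_of_le hε1 (min_le_right _ _)
  set a : ℝ := aEps r₁ r₂ ε with ha
  have hPe0 : 0 < (2*r₁+ε) * (2*r₂+ε) * (2*r₁+2*r₂+ε) := by positivity
  have ha0 : 0 < a := by
    rw [ha, aEps]
    exact div_pos (mul_pos (Real.sqrt_pos.2 hε0) (Real.sqrt_pos.2 hPe0)) (by positivity)
  have ha2 : a ^ 2 = ε * ((2*r₁+ε) * (2*r₂+ε) * (2*r₁+2*r₂+ε)) / (2*(r₁+r₂+ε)) ^ 2 := by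
    rw [ha, aEps, div_pow, mul_pow, Real.sq_sqrt (le_of_lt hε0), Real.sq_sqrt (le_of_lt hPe0)]
  have ha1 : a ≤ 1 := by
    have h1 : ε * ((2*r₁+ε) * (2*r₂+ε) * (2*r₁+2*r₂+ε)) ≤ ε * P1 := by
      apply mul_le_mul_of_nonneg_left _ (le_of_lt hε0)
      rw [hP1]
      have e1 : 2*r₁+ε ≤ 2*r₁+1 := by linarith
      have e2 : 2*r₂+ε ≤ 2*r₂+1 := by linarith
      have e3 : 2*r₁+2*r₂+ε ≤ 2*r₁+2*r₂+1 := by linarith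
      exact mul_le_mul (mul_le_mul e1 e2 (by linarith) (by linarith)) e3 (by linarith)
        (mul_nonneg (by linarith) (by linarith))
    have h2 : ε * P1 < (2 * (r₁ + r₂)) ^ 2 := by
      exact (lt_div_iff₀ hP10).1 hε_le_P
    have h3 : (2 * (r₁ + r₂)) ^ 2 ≤ (2 * (r₁ + r₂ + ε)) ^ 2 := by nlinarith
    have ha2' : a ^ 2 ≤ 1 := by
      rw [ha2, div_le_one (by positivity)]
      linarith
    nlinarith
  set ξ₁ : ℝ := xi r₁ r₁ r₂ ε with hξ₁
  set ξ₂ : ℝ := xi r₂ r₁ r₂ ε with hξ₂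
  have hsinh1 : Real.sinh ξ₁ = a / r₁ := Real.sinh_arsinh _
  have hsinh2 : Real.sinh ξ₂ = a / r₂ := Real.sinh_arsinh _
  have hξ₁0 : 0 < ξ₁ := Real.arsinh_pos_iff.2 (by positivity)
  have hξ₂0 : 0 < ξ₂ := Real.arsinh_pos_iff.2 (by positivity)
  have hξ₁le : ξ₁ ≤ a / r₁ := by
    rw [← hsinh1]; exact le_of_lt (Real.self_lt_sinh_iff.2 hξ₁0)
  have hξ₂le : ξ₂ ≤ a / r₂ := by
    rw [← hsinh2]; exact le_of_lt (Real.self_lt_sinh_iff.2 hξ₂0)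
  set s₀ : ℝ := ξ₁ + ξ₂ with hs₀
  have hs₀0 : 0 < s₀ := by positivity
  have hs₀le : s₀ ≤ a * M := by
    rw [hs₀, hM]
    rw [div_eq_mul_one_div a r₁] at hξ₁le
    rw [div_eq_mul_one_div a r₂] at hξ₂le
    have : a * (1/r₁ + 1/r₂) = a * (1/r₁) + a * (1/r₂) := by ring
    linarith
  have hs₀M : s₀ ≤ M := le_trans hs₀le (by nlinarith)
  -- lower bound for ξ₁, ξ₂
  have hcosh_le : Real.cosh s₀ ≤ Real.cosh M := by
    rw [Real.cosh_le_cosh, abs_of_pos hs₀0, abs_of_pos hM0]; exact hs₀M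
  have hξ₁ge : a ≤ R * Real.cosh M * ξ₁ := by
    have h1 : Real.sinh ξ₁ ≤ ξ₁ * Real.cosh ξ₁ := sinh_le_mul_cosh (le_of_lt hξ₁0)
    have h2 : Real.cosh ξ₁ ≤ Real.cosh M := by
      rw [Real.cosh_le_cosh, abs_of_pos hξ₁0, abs_of_pos hM0]; linarith
    have h3 : a / r₁ ≤ ξ₁ * Real.cosh M := by
      rw [← hsinh1]; nlinarith
    rw [div_le_iff₀ hr₁] at h3
    have h4 : r₁ ≤ R := le_max_left _ _
    nlinarith
  have hξ₂ge : a ≤ R * Real.cosh M * ξ₂ := by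
    have h1 : Real.sinh ξ₂ ≤ ξ₂ * Real.cosh ξ₂ := sinh_le_mul_cosh (le_of_lt hξ₂0)
    have h2 : Real.cosh ξ₂ ≤ Real.cosh M := by
      rw [Real.cosh_le_cosh, abs_of_pos hξ₂0, abs_of_pos hM0]; linarith
    have h3 : a / r₂ ≤ ξ₂ * Real.cosh M := by
      rw [← hsinh2]; nlinarith
    rw [div_le_iff₀ hr₂] at h3
    have h4 : r₂ ≤ R := le_max_right _ _
    nlinarith
  -- bound on sinh(3 s₀)^2
  have hsinh3s : Real.sinh (3 * s₀) ^ 2 ≤ 9 * M ^ 2 * Real.cosh (3 * M) ^ 2 * a ^ 2 := by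
    have h1 : Real.sinh (3 * s₀) ≤ 3 * s₀ * Real.cosh (3 * s₀) :=
      sinh_le_mul_cosh (by positivity)
    have h2 : Real.cosh (3 * s₀) ≤ Real.cosh (3 * M) := by
      rw [Real.cosh_le_cosh, abs_of_pos (by positivity), abs_of_pos (by positivity)]
      linarith
    have h0 : 0 ≤ Real.sinh (3 * s₀) := by
      rw [← Real.sinh_zero]; exact Real.sinh_le_sinh.2 (by positivity)
    have haM : 0 < a * M := mul_pos ha0 hM0
    have h4 : 3 * s₀ * Real.cosh (3 * s₀) ≤ 3 * (a * M) * Real.cosh (3 * M) :=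
      mul_le_mul (by linarith) h2 (le_of_lt (Real.cosh_pos _)) (by linarith)
    have h3 : Real.sinh (3 * s₀) ≤ 3 * (a * M) * Real.cosh (3 * M) := le_trans h1 h4
    calc Real.sinh (3 * s₀) ^ 2 ≤ (3 * (a * M) * Real.cosh (3 * M)) ^ 2 :=
          pow_le_pow_left₀ h0 h3 2
      _ = 9 * M ^ 2 * Real.cosh (3 * M) ^ 2 * a ^ 2 := by ring
  -- key : sinh(3 s₀)^2 ≤ C * (a * ξⱼ)
  have h5 : (0:ℝ) ≤ 9 * M ^ 2 * Real.cosh (3 * M) ^ 2 * a :=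
    mul_nonneg (mul_nonneg (mul_nonneg (by norm_num) (sq_nonneg M))
      (sq_nonneg _)) (le_of_lt ha0)
  have hkey₁ : Real.sinh (3 * s₀) ^ 2 ≤ C * (a * ξ₁) := by
    have h6 : 9 * M ^ 2 * Real.cosh (3 * M) ^ 2 * a ^ 2 ≤ C * (a * ξ₁) := by
      rw [hC]
      calc 9 * M ^ 2 * Real.cosh (3 * M) ^ 2 * a ^ 2
          = 9 * M ^ 2 * Real.cosh (3 * M) ^ 2 * a * a := by ring
        _ ≤ 9 * M ^ 2 * Real.cosh (3 * M) ^ 2 * a * (R * Real.cosh M * ξ₁) :=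
            mul_le_mul_of_nonneg_left hξ₁ge h5
        _ = 9 * M ^ 2 * R * Real.cosh M * Real.cosh (3 * M) ^ 2 * (a * ξ₁) := by ring
    linarith [hsinh3s]
  have hkey₂ : Real.sinh (3 * s₀) ^ 2 ≤ C * (a * ξ₂) := by
    have h6 : 9 * M ^ 2 * Real.cosh (3 * M) ^ 2 * a ^ 2 ≤ C * (a * ξ₂) := by
      rw [hC]
      calc 9 * M ^ 2 * Real.cosh (3 * M) ^ 2 * a ^ 2
          = 9 * M ^ 2 * Real.cosh (3 * M) ^ 2 * a * a := by ring
        _ ≤ 9 * M ^ 2 * Real.cosh (3 * M) ^ 2 * a * (R * Real.cosh M * ξ₂) :=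
            mul_le_mul_of_nonneg_left hξ₂ge h5
        _ = 9 * M ^ 2 * R * Real.cosh M * Real.cosh (3 * M) ^ 2 * (a * ξ₂) := by ring
    linarith [hsinh3s]
  have hSnn : (0 : ℝ) ≤ Real.sinh (3 * s₀) ^ 2 := sq_nonneg _
  intro ξ hξmem θ hθmem
  obtain ⟨hξl, hξr⟩ := hξmem
  obtain ⟨hθl, hθr⟩ := hθmem
  have hsin0 : 0 ≤ Real.sin θ := Real.sin_nonneg_of_nonneg_of_le_pi hθl hθr
  have hξl' : -ξ₁ ≤ ξ := hξl
  have hξr' : ξ ≤ ξ₂ := hξr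
  constructor
  · -- first integral : p = 2ξ₁ + ξ, q = 2 s₀ - ξ, L = ξ₁
    have hI := int_bound θ ξ (2 * ξ₁ + ξ) (2 * s₀ - ξ) ξ₁ (3 * s₀) hsin0 hξ₁0
      (by linarith) (by linarith) (by simp only [hs₀]; linarith)
      (abs_le.2 ⟨by linarith, by linarith⟩)
    have he : Real.sin θ * w θ ξ / (4 * a * s₀) *
        ∫ t in (2 * ξ₁ + ξ)..(2 * s₀ - ξ), (w θ t ^ 2 - w θ ξ ^ 2) / w θ t ^ 3 =
        (1 / (4 * a * s₀)) * (Real.sin θ * w θ ξ *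
        ∫ t in (2 * ξ₁ + ξ)..(2 * s₀ - ξ), (w θ t ^ 2 - w θ ξ ^ 2) / w θ t ^ 3) := by
      ring
    rw [he, ← intervalIntegral.integral_const_mul, abs_mul,
      abs_of_pos (show (0:ℝ) < 1 / (4 * a * s₀) by positivity)]
    have hqp : 2 * s₀ - ξ - (2 * ξ₁ + ξ) ≤ 2 * s₀ := by simp only [hs₀]; linarith
    have hfinal : 1 / (4 * a * s₀) *
        (2 * Real.sinh (3 * s₀) ^ 2 / ξ₁ * (2 * s₀ - ξ - (2 * ξ₁ + ξ))) ≤ C := by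
      have heq : 1 / (4 * a * s₀) *
          (2 * Real.sinh (3 * s₀) ^ 2 / ξ₁ * (2 * s₀ - ξ - (2 * ξ₁ + ξ))) =
          Real.sinh (3 * s₀) ^ 2 * (2 * s₀ - ξ - (2 * ξ₁ + ξ)) /
            (2 * (a * s₀ * ξ₁)) := by
        field_simp
        ring
      rw [heq, div_le_iff₀ (by positivity)]
      have h1 : Real.sinh (3 * s₀) ^ 2 * (2 * s₀ - ξ - (2 * ξ₁ + ξ)) ≤
          Real.sinh (3 * s₀) ^ 2 * (2 * s₀) := mul_le_mul_of_nonneg_left hqp hSnn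
      have h2 : Real.sinh (3 * s₀) ^ 2 * (2 * s₀) ≤ C * (a * ξ₁) * (2 * s₀) :=
        mul_le_mul_of_nonneg_right hkey₁ (by linarith)
      have h3 : C * (a * ξ₁) * (2 * s₀) = C * (2 * (a * s₀ * ξ₁)) := by ring
      linarith
    calc 1 / (4 * a * s₀) * |∫ t in (2 * ξ₁ + ξ)..(2 * s₀ - ξ),
          Real.sin θ * w θ ξ * ((w θ t ^ 2 - w θ ξ ^ 2) / w θ t ^ 3)|
        ≤ 1 / (4 * a * s₀) * (2 * Real.sinh (3 * s₀) ^ 2 / ξ₁ *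
          (2 * s₀ - ξ - (2 * ξ₁ + ξ))) := by
          apply mul_le_mul_of_nonneg_left hI (by positivity)
      _ ≤ C := hfinal
  · -- second integral : p = 2ξ₂ - ξ, q = 2 s₀ + ξ, L = ξ₂
    have hI := int_bound θ ξ (2 * ξ₂ - ξ) (2 * s₀ + ξ) ξ₂ (3 * s₀) hsin0 hξ₂0
      (by linarith) (by linarith) (by simp only [hs₀]; linarith)
      (abs_le.2 ⟨by linarith, by linarith⟩)
    have he : Real.sin θ * w θ ξ / (4 * a * s₀) *
        ∫ t in (2 * ξ₂ - ξ)..(2 * s₀ + ξ), (w θ t ^ 2 - w θ ξ ^ 2) / w θ t ^ 3 =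
        (1 / (4 * a * s₀)) * (Real.sin θ * w θ ξ *
        ∫ t in (2 * ξ₂ - ξ)..(2 * s₀ + ξ), (w θ t ^ 2 - w θ ξ ^ 2) / w θ t ^ 3) := by
      ring
    rw [he, ← intervalIntegral.integral_const_mul, abs_mul,
      abs_of_pos (show (0:ℝ) < 1 / (4 * a * s₀) by positivity)]
    have hqp : 2 * s₀ + ξ - (2 * ξ₂ - ξ) ≤ 2 * s₀ := by simp only [hs₀]; linarith
    have hfinal : 1 / (4 * a * s₀) *
        (2 * Real.sinh (3 * s₀) ^ 2 / ξ₂ * (2 * s₀ + ξ - (2 * ξ₂ - ξ))) ≤ C := by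
      have heq : 1 / (4 * a * s₀) *
          (2 * Real.sinh (3 * s₀) ^ 2 / ξ₂ * (2 * s₀ + ξ - (2 * ξ₂ - ξ))) =
          Real.sinh (3 * s₀) ^ 2 * (2 * s₀ + ξ - (2 * ξ₂ - ξ)) /
            (2 * (a * s₀ * ξ₂)) := by
        field_simp
        ring
      rw [heq, div_le_iff₀ (by positivity)]
      have h1 : Real.sinh (3 * s₀) ^ 2 * (2 * s₀ + ξ - (2 * ξ₂ - ξ)) ≤
          Real.sinh (3 * s₀) ^ 2 * (2 * s₀) := mul_le_mul_of_nonneg_left hqp hSnn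
      have h2 : Real.sinh (3 * s₀) ^ 2 * (2 * s₀) ≤ C * (a * ξ₂) * (2 * s₀) :=
        mul_le_mul_of_nonneg_right hkey₂ (by linarith)
      have h3 : C * (a * ξ₂) * (2 * s₀) = C * (2 * (a * s₀ * ξ₂)) := by ring
      linarith
    calc 1 / (4 * a * s₀) * |∫ t in (2 * ξ₂ - ξ)..(2 * s₀ + ξ),
          Real.sin θ * w θ ξ * ((w θ t ^ 2 - w θ ξ ^ 2) / w θ t ^ 3)|
        ≤ 1 / (4 * a * s₀) * (2 * Real.sinh (3 * s₀) ^ 2 / ξ₂ *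
          (2 * s₀ + ξ - (2 * ξ₂ - ξ))) := by
          apply mul_le_mul_of_nonneg_left hI (by positivity)
      _ ≤ C := hfinal

end
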